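/- Let (X,d) be a complete metric space and T : X → X satisfy ψ(d(Tx,Ty)) ≤ a·ψ(d(x,y)) + b·ψ(m(x,y)) for all x, y ∈ X, where a, b > 0, a + b < 1, m(x,y) = d(y,Ty)·(1 + d(x,Tx))/(1 + d(x,y)), and ψ is an altering distance function. Then T has a unique fixed point p ∈ X, and T^n x → p for every x ∈ X. -/

import Mathlib

/-!
Along an orbit `xₙ = Tⁿ x` the rational term is `m(xₙ, xₙ₊₁) = d(xₙ₊₁, xₙ₊₂)`, so
`ψ(dₙ₊₁) ≤ a ψ(dₙ) + b ψ(dₙ₊₁)` and `ψ(dₙ)` decays geometrically with ratio `a / (1 - b) < 1`;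
hence `dₙ → 0`. Given `ε > 0`, continuity of `ψ` and `a < 1` give `δ > 0` with
`a ψ(ε + δ) + b ψ(δ (1 + δ)) < ψ(ε)`; once all steps beyond `x_N` are shorter than `δ`, an induction
keeps every later `x_m` within `ε + δ` of `x_N`, so the orbit is Cauchy. Passing to the limit in
the contractive inequality at `(xₙ, p)` gives `ψ(d(p, Tp)) ≤ b ψ(d(p, Tp))`, so the limit is fixed,
and for two fixed points the rational term vanishes, which forces them to coincide.
-/

open Filter Set Topology Function

structure IsAlteringDistance (ψ : ℝ → ℝ) : Prop where
  continuousOn : ContinuousOn ψ (Ici 0)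
  monotoneOn : MonotoneOn ψ (Ici 0)
  eq_zero_iff : ∀ t, 0 ≤ t → (ψ t = 0 ↔ t = 0)

namespace IsAlteringDistance

variable {ψ : ℝ → ℝ}

theorem map_zero (hψ : IsAlteringDistance ψ) : ψ 0 = 0 :=
  (hψ.eq_zero_iff 0 le_rfl).2 rfl

theorem nonneg (hψ : IsAlteringDistance ψ) {t : ℝ} (ht : 0 ≤ t) : 0 ≤ ψ t :=
  hψ.map_zero ▸ hψ.monotoneOn (mem_Ici.2 le_rfl) ht ht

theorem pos (hψ : IsAlteringDistance ψ) {t : ℝ} (ht : 0 < t) : 0 < ψ t :=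
  (hψ.nonneg ht.le).lt_of_ne' fun h => ht.ne' ((hψ.eq_zero_iff t ht.le).1 h)

theorem lt_of_map_lt (hψ : IsAlteringDistance ψ) {s t : ℝ} (hs : 0 ≤ s) (ht : 0 ≤ t)
    (h : ψ s < ψ t) : s < t :=
  lt_of_not_ge fun hts => (hψ.monotoneOn ht hs hts).not_gt h

theorem eq_zero_of_map_le_mul (hψ : IsAlteringDistance ψ) {k t : ℝ} (hk : k < 1) (ht : 0 ≤ t)
    (h : ψ t ≤ k * ψ t) : t = 0 := by
  refine (hψ.eq_zero_iff t ht).1 (le_antisymm ?_ (hψ.nonneg ht))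
  nlinarith [hψ.nonneg ht]

theorem tendsto_comp (hψ : IsAlteringDistance ψ) {ι : Type*} {l : Filter ι} {f : ι → ℝ} {t : ℝ}
    (ht : 0 ≤ t) (hf : Tendsto f l (𝓝 t)) (hf0 : ∀ᶠ i in l, 0 ≤ f i) :
    Tendsto (fun i => ψ (f i)) l (𝓝 (ψ t)) :=
  (hψ.continuousOn t ht).tendsto.comp
    (tendsto_nhdsWithin_of_tendsto_nhds_of_eventually_within f hf hf0)

theorem tendsto_zero_of_tendsto_map (hψ : IsAlteringDistance ψ) {ι : Type*} {l : Filter ι}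
    {f : ι → ℝ} (hf0 : ∀ i, 0 ≤ f i) (h : Tendsto (fun i => ψ (f i)) l (𝓝 0)) :
    Tendsto f l (𝓝 0) := by
  rw [Metric.tendsto_nhds]
  intro ε hε
  filter_upwards [h.eventually_lt_const (hψ.pos hε)] with i hi
  rw [Real.dist_0_eq_abs, abs_of_nonneg (hf0 i)]
  exact hψ.lt_of_map_lt (hf0 i) hε.le hi

theorem eventually_mul_map_add_lt (hψ : IsAlteringDistance ψ) {a ε : ℝ} (b : ℝ) (ha : a < 1)
    (hε : 0 < ε) : ∀ᶠ δ in 𝓝[>] 0, a * ψ (ε + δ) + b * ψ (δ * (1 + δ)) < ψ ε := by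
  have hpos : ∀ᶠ δ in 𝓝[>] (0 : ℝ), 0 ≤ δ := eventually_nhdsWithin_of_forall fun _ h => le_of_lt h
  have hlim : Tendsto (fun δ => a * ψ (ε + δ) + b * ψ (δ * (1 + δ))) (𝓝[>] 0)
      (𝓝 (a * ψ ε + b * ψ 0)) := by
    refine ((hψ.tendsto_comp hε.le ?_ ?_).const_mul a).add
      ((hψ.tendsto_comp le_rfl ?_ ?_).const_mul b)
    · exact ((continuous_const.add continuous_id).tendsto' 0 ε (add_zero ε)).mono_left
        nhdsWithin_le_nhds
    · exact hpos.mono fun δ hδ => by positivity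
    · exact ((continuous_id.mul (continuous_const.add continuous_id)).tendsto' 0 0
        (zero_mul _)).mono_left nhdsWithin_le_nhds
    · exact hpos.mono fun δ hδ => by positivity
  refine hlim.eventually_lt_const ?_
  rw [hψ.map_zero, mul_zero, add_zero]
  exact mul_lt_of_lt_one_left (hψ.pos hε) ha

end IsAlteringDistance

section AlteringContraction

variable {X : Type*} [MetricSpace X] {ψ : ℝ → ℝ} {a b : ℝ} {T : X → X}

variable (ψ a b) in
def IsAlteringContraction (T : X → X) : Prop :=
  ∀ x y, ψ (dist (T x) (T y)) ≤ a * ψ (dist x y) +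
    b * ψ (dist y (T y) * (1 + dist x (T x)) / (1 + dist x y))

namespace IsAlteringContraction

theorem map_dist_image_le (hT : IsAlteringContraction ψ a b T) (hb : b < 1) (x : X) :
    ψ (dist (T x) (T (T x))) ≤ a / (1 - b) * ψ (dist x (T x)) := by
  have h := hT x (T x)
  rw [mul_div_assoc, div_self (by positivity), mul_one] at h
  rw [div_mul_eq_mul_div, le_div_iff₀ (sub_pos.2 hb)]
  linarith

theorem map_dist_iterate_le (hT : IsAlteringContraction ψ a b T) (ha : 0 ≤ a) (hb : b < 1)
    (x : X) (n : ℕ) :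
    ψ (dist (T^[n] x) (T^[n + 1] x)) ≤ (a / (1 - b)) ^ n * ψ (dist x (T x)) := by
  induction n with
  | zero => simp
  | succ n ih =>
    rw [iterate_succ_apply' T n] at ih
    rw [iterate_succ_apply' T (n + 1), iterate_succ_apply' T n]
    calc ψ (dist (T (T^[n] x)) (T (T (T^[n] x))))
        ≤ a / (1 - b) * ψ (dist (T^[n] x) (T (T^[n] x))) := hT.map_dist_image_le hb _
      _ ≤ a / (1 - b) * ((a / (1 - b)) ^ n * ψ (dist x (T x))) :=
          mul_le_mul_of_nonneg_left ih (div_nonneg ha (sub_pos.2 hb).le)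
      _ = (a / (1 - b)) ^ (n + 1) * ψ (dist x (T x)) := by ring

theorem tendsto_dist_iterate_succ (hT : IsAlteringContraction ψ a b T)
    (hψ : IsAlteringDistance ψ) (ha : 0 ≤ a) (hab : a + b < 1) (x : X) :
    Tendsto (fun n => dist (T^[n] x) (T^[n + 1] x)) atTop (𝓝 0) := by
  have hb : 0 < 1 - b := by linarith
  have hgeom : Tendsto (fun n => (a / (1 - b)) ^ n * ψ (dist x (T x))) atTop (𝓝 0) := by
    simpa using (tendsto_pow_atTop_nhds_zero_of_lt_one (div_nonneg ha hb.le)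
      ((div_lt_one hb).2 (by linarith))).mul_const (ψ (dist x (T x)))
  exact hψ.tendsto_zero_of_tendsto_map (fun n => dist_nonneg) <|
    squeeze_zero (fun n => hψ.nonneg dist_nonneg) (hT.map_dist_iterate_le ha (by linarith) x)
      hgeom

theorem dist_iterate_lt (hT : IsAlteringContraction ψ a b T) (hψ : IsAlteringDistance ψ)
    (ha : 0 ≤ a) (hb : 0 ≤ b) {ε δ : ℝ} (hε : 0 ≤ ε) (hδ : 0 ≤ δ)
    (hεδ : a * ψ (ε + δ) + b * ψ (δ * (1 + δ)) < ψ ε) {x : X}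
    (hsteps : ∀ n, dist (T^[n] x) (T^[n + 1] x) < δ) (n : ℕ) :
    dist x (T^[n] x) < ε + δ := by
  induction n with
  | zero => simpa using add_pos_of_nonneg_of_pos hε (dist_nonneg.trans_lt (hsteps 0))
  | succ n ih =>
    set y := T^[n] x
    have hx : dist x (T x) < δ := by simpa using hsteps 0
    have hy : dist y (T y) < δ := by simpa only [iterate_succ_apply'] using hsteps n
    have hm : dist y (T y) * (1 + dist x (T x)) / (1 + dist x y) ≤ δ * (1 + δ) :=
      calc dist y (T y) * (1 + dist x (T x)) / (1 + dist x y)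
          ≤ dist y (T y) * (1 + dist x (T x)) :=
            div_le_self (by positivity) (le_add_of_nonneg_right dist_nonneg)
        _ ≤ δ * (1 + δ) := mul_le_mul hy.le (by linarith) (by positivity) hδ
    have hψT : ψ (dist (T x) (T y)) < ψ ε :=
      calc ψ (dist (T x) (T y))
          ≤ a * ψ (dist x y) + b * ψ (dist y (T y) * (1 + dist x (T x)) / (1 + dist x y)) :=
            hT x y
        _ ≤ a * ψ (ε + δ) + b * ψ (δ * (1 + δ)) := by
            gcongr a * ?_ + b * ?_
            · exact hψ.monotoneOn (mem_Ici.2 dist_nonneg) (mem_Ici.2 (by positivity)) ih.le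
            · exact hψ.monotoneOn (mem_Ici.2 (by positivity)) (mem_Ici.2 (by positivity)) hm
        _ < ψ ε := hεδ
    calc dist x (T^[n + 1] x) ≤ dist x (T x) + dist (T x) (T y) := by
          rw [iterate_succ_apply']
          exact dist_triangle _ _ _
      _ < δ + ε := add_lt_add hx (hψ.lt_of_map_lt dist_nonneg hε hψT)
      _ = ε + δ := add_comm _ _

theorem cauchySeq_iterate (hT : IsAlteringContraction ψ a b T) (hψ : IsAlteringDistance ψ)
    (ha : 0 ≤ a) (hb : 0 ≤ b) (hab : a + b < 1) (x : X) : CauchySeq fun n => T^[n] x := by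
  rw [Metric.cauchySeq_iff']
  intro ε hε
  have ha1 : a < 1 := by linarith
  have hδ_small := (hψ.eventually_mul_map_add_lt b ha1 (half_pos hε)).and
    ((eventually_nhdsWithin_of_eventually_nhds (eventually_lt_nhds (half_pos hε))).and
      self_mem_nhdsWithin)
  obtain ⟨δ, hεδ, hδε, hδ⟩ := hδ_small.exists
  obtain ⟨N, hN⟩ := eventually_atTop.1
    ((hT.tendsto_dist_iterate_succ hψ ha hab x).eventually_lt_const hδ)
  refine ⟨N, fun n hn => ?_⟩
  obtain ⟨k, rfl⟩ := Nat.exists_eq_add_of_le hn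
  have hsteps : ∀ m, dist (T^[m] (T^[N] x)) (T^[m + 1] (T^[N] x)) < δ := fun m => by
    simpa only [← iterate_add_apply, Nat.add_right_comm m 1 N, Nat.add_comm m N,
      Nat.add_comm (m + 1) N] using hN (N + m) (Nat.le_add_right N m)
  have h := hT.dist_iterate_lt hψ ha hb (half_pos hε).le (le_of_lt hδ) hεδ hsteps k
  rw [dist_comm, ← iterate_add_apply, Nat.add_comm] at h
  linarith

theorem isFixedPt_of_tendsto_iterate (hT : IsAlteringContraction ψ a b T)
    (hψ : IsAlteringDistance ψ) (hb : b < 1) {x p : X}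
    (hp : Tendsto (fun n => T^[n] x) atTop (𝓝 p)) : IsFixedPt T p := by
  have hsucc : Tendsto (fun n => T (T^[n] x)) atTop (𝓝 p) := by
    simpa only [comp_def, iterate_succ_apply'] using hp.comp (tendsto_add_atTop_nat 1)
  have hdist : Tendsto (fun n => dist (T^[n] x) p) atTop (𝓝 0) :=
    tendsto_iff_dist_tendsto_zero.1 hp
  have hstep : Tendsto (fun n => dist (T^[n] x) (T (T^[n] x))) atTop (𝓝 0) := by
    simpa using hp.dist hsucc
  have hlhs : Tendsto (fun n => ψ (dist (T (T^[n] x)) (T p))) atTop (𝓝 (ψ (dist p (T p)))) :=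
    hψ.tendsto_comp dist_nonneg (hsucc.dist tendsto_const_nhds)
      (Eventually.of_forall fun _ => dist_nonneg)
  have hm : Tendsto (fun n => dist p (T p) * (1 + dist (T^[n] x) (T (T^[n] x))) /
      (1 + dist (T^[n] x) p)) atTop (𝓝 (dist p (T p))) := by
    have h := (tendsto_const_nhds (x := dist p (T p)).mul
      (tendsto_const_nhds (x := (1 : ℝ)).add hstep)).div
      (tendsto_const_nhds (x := (1 : ℝ)).add hdist) (by norm_num)
    simp only [add_zero, mul_one, div_one] at h
    exact h
  have hrhs : Tendsto (fun n => a * ψ (dist (T^[n] x) p) +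
      b * ψ (dist p (T p) * (1 + dist (T^[n] x) (T (T^[n] x))) / (1 + dist (T^[n] x) p)))
      atTop (𝓝 (a * ψ 0 + b * ψ (dist p (T p)))) :=
    ((hψ.tendsto_comp le_rfl hdist (Eventually.of_forall fun _ => dist_nonneg)).const_mul a).add
      ((hψ.tendsto_comp dist_nonneg hm (Eventually.of_forall fun _ => by positivity)).const_mul b)
  have hle : ψ (dist p (T p)) ≤ b * ψ (dist p (T p)) := by
    simpa [hψ.map_zero] using le_of_tendsto_of_tendsto' hlhs hrhs fun n => hT _ p
  exact (dist_eq_zero.1 (hψ.eq_zero_of_map_le_mul hb dist_nonneg hle)).symm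

theorem eq_of_isFixedPt (hT : IsAlteringContraction ψ a b T) (hψ : IsAlteringDistance ψ)
    (ha : a < 1) {p q : X} (hp : IsFixedPt T p) (hq : IsFixedPt T q) : p = q := by
  have h := hT p q
  rw [hp.eq, hq.eq, dist_self, zero_mul, zero_div, hψ.map_zero, mul_zero, add_zero] at h
  exact dist_eq_zero.1 (hψ.eq_zero_of_map_le_mul ha dist_nonneg h)

theorem exists_isFixedPt_tendsto_iterate [CompleteSpace X] (hT : IsAlteringContraction ψ a b T)
    (hψ : IsAlteringDistance ψ) (ha : 0 ≤ a) (hb : 0 ≤ b) (hab : a + b < 1) (x : X) :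
    ∃ p, IsFixedPt T p ∧ Tendsto (fun n => T^[n] x) atTop (𝓝 p) :=
  let ⟨p, hp⟩ := cauchySeq_tendsto_of_complete (hT.cauchySeq_iterate hψ ha hb hab x)
  ⟨p, hT.isFixedPt_of_tendsto_iterate hψ (by linarith) hp, hp⟩

end IsAlteringContraction

end AlteringContraction

theorem stmt_9_general {X : Type*} [MetricSpace X] [CompleteSpace X] [Nonempty X]
    (a b : ℝ) (ha : 0 < a) (hb : 0 < b) (hab : a + b < 1)
    (ψ : ℝ → ℝ)
    (hψc : ContinuousOn ψ (Set.Ici 0)) (hψm : MonotoneOn ψ (Set.Ici 0))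
    (hψ0 : ∀ t, 0 ≤ t → (ψ t = 0 ↔ t = 0))
    (T : X → X)
    (hT : ∀ x y : X,
      ψ (dist (T x) (T y)) ≤ a * ψ (dist x y) +
        b * ψ (dist y (T y) * (1 + dist x (T x)) / (1 + dist x y))) :
    ∃ p : X, T p = p ∧ (∀ q : X, T q = q → q = p) ∧
      ∀ x : X, Tendsto (fun n => T^[n] x) atTop (nhds p) := by
  have hψ : IsAlteringDistance ψ := ⟨hψc, hψm, hψ0⟩
  have hT : IsAlteringContraction ψ a b T := hT
  have ha1 : a < 1 := by linarith
  obtain ⟨p, hp, -⟩ :=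
    hT.exists_isFixedPt_tendsto_iterate hψ ha.le hb.le hab (Classical.arbitrary X)
  refine ⟨p, hp, fun q hq => hT.eq_of_isFixedPt hψ ha1 hq hp, fun x => ?_⟩
  obtain ⟨q, hq, hxq⟩ := hT.exists_isFixedPt_tendsto_iterate hψ ha.le hb.le hab x
  rwa [hT.eq_of_isFixedPt hψ ha1 hq hp] at hxq

theorem stmt_9 {X : Type*} [MetricSpace X] [CompleteSpace X] [Nonempty X]
    (a b : ℝ) (ha : 0 < a) (hb : 0 < b) (hab : a + b < 1)
    (ψ : ℝ → ℝ)
    (hψc : ContinuousOn ψ (Set.Ici 0)) (hψm : MonotoneOn ψ (Set.Ici 0))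
    (hψnn : ∀ t, 0 ≤ t → 0 ≤ ψ t) (hψ0 : ∀ t, 0 ≤ t → (ψ t = 0 ↔ t = 0))
    (T : X → X)
    (hT : ∀ x y : X,
      ψ (dist (T x) (T y)) ≤ a * ψ (dist x y) +
        b * ψ (dist y (T y) * (1 + dist x (T x)) / (1 + dist x y))) :
    ∃ p : X, T p = p ∧ (∀ q : X, T q = q → q = p) ∧
      ∀ x : X, Tendsto (fun n => T^[n] x) atTop (nhds p) :=
  stmt_9_general a b ha hb hab ψ hψc hψm hψ0 T hT
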